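/- For the side and diameter number sequences, for every natural number n the real numbers satisfy (√2·a(n) − d(n))·(√2·a(n) + d(n)) = (−1)^n; consequently the difference √2·a(n) − d(n) tends to 0 as n → ∞. -/
import Mathlib


/-- The pair (side number, diameter number) at stage `n`:
`(a 0, d 0) = (1, 1)`, `a (n+1) = a n + d n`, `d (n+1) = 2 * a n + d n`. -/
def sideDiam : ℕ → ℕ × ℕ
  | 0 => (1, 1)
  | n + 1 => ((sideDiam n).1 + (sideDiam n).2, 2 * (sideDiam n).1 + (sideDiam n).2)

/-- The side numbers: `a 0 = 1`, `a (n+1) = a n + d n`. -/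
def sideNum (n : ℕ) : ℕ := (sideDiam n).1

/-- The diameter numbers: `d 0 = 1`, `d (n+1) = 2 * a n + d n`. -/
def diamNum (n : ℕ) : ℕ := (sideDiam n).2

open Filter Real

lemma sideDiam_key (n : ℕ) :
    2 * ((sideDiam n).1 : ℤ) ^ 2 - ((sideDiam n).2 : ℤ) ^ 2 = (-1) ^ n := by
  induction n with
  | zero => simp [sideDiam]
  | succ n ih =>
    simp only [sideDiam, pow_succ]
    push_cast
    ring_nf
    ring_nf at ih
    linarith

lemma sideDiam_pos (n : ℕ) : 1 ≤ (sideDiam n).1 ∧ 1 ≤ (sideDiam n).2 := by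
  induction n with
  | zero => simp [sideDiam]
  | succ n ih => simp only [sideDiam]; omega

lemma sideNum_ge (n : ℕ) : n + 1 ≤ sideNum n := by
  induction n with
  | zero => simp [sideNum, sideDiam]
  | succ n ih =>
    have := (sideDiam_pos n).2
    simp only [sideNum, sideDiam] at *
    omega

theorem side_diam_sqrt_two_diff :
    (∀ n : ℕ,
      (Real.sqrt 2 * (sideNum n : ℝ) - (diamNum n : ℝ)) *
        (Real.sqrt 2 * (sideNum n : ℝ) + (diamNum n : ℝ)) = (-1 : ℝ) ^ n) ∧
    Filter.Tendsto (fun n : ℕ => Real.sqrt 2 * (sideNum n : ℝ) - (diamNum n : ℝ))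
      Filter.atTop (nhds 0) := by
  have s2 : Real.sqrt 2 * Real.sqrt 2 = 2 := Real.mul_self_sqrt (by norm_num)
  have hprod : ∀ n : ℕ,
      (Real.sqrt 2 * (sideNum n : ℝ) - (diamNum n : ℝ)) *
        (Real.sqrt 2 * (sideNum n : ℝ) + (diamNum n : ℝ)) = (-1 : ℝ) ^ n := by
    intro n
    have h := sideDiam_key n
    have h' : 2 * ((sideNum n : ℝ)) ^ 2 - ((diamNum n : ℝ)) ^ 2 = (-1 : ℝ) ^ n := by
      have := congrArg (fun x : ℤ => (x : ℝ)) h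
      push_cast at this
      simpa [sideNum, diamNum] using this
    nlinarith [h']
  refine ⟨hprod, ?_⟩
  have hbound : ∀ n : ℕ,
      ‖Real.sqrt 2 * (sideNum n : ℝ) - (diamNum n : ℝ)‖ ≤ 1 / (n + 1 : ℝ) := by
    intro n
    have ha : (n + 1 : ℝ) ≤ (sideNum n : ℝ) := by exact_mod_cast sideNum_ge n
    have hd : (1 : ℝ) ≤ (diamNum n : ℝ) := by exact_mod_cast (sideDiam_pos n).2
    have hs : Real.sqrt 2 * (sideNum n : ℝ) ≥ (sideNum n : ℝ) := by
      nlinarith [Real.sq_sqrt (by norm_num : (2:ℝ) ≥ 0), Real.sqrt_nonneg 2,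
        Real.one_le_sqrt.mpr (by norm_num : (1:ℝ) ≤ 2)]
    have hden : (n + 1 : ℝ) ≤ Real.sqrt 2 * (sideNum n : ℝ) + (diamNum n : ℝ) := by
      linarith
    have hdenpos : (0 : ℝ) < Real.sqrt 2 * (sideNum n : ℝ) + (diamNum n : ℝ) := by
      have : (0:ℝ) < n + 1 := by positivity
      linarith
    have habs : |Real.sqrt 2 * (sideNum n : ℝ) - (diamNum n : ℝ)| *
        (Real.sqrt 2 * (sideNum n : ℝ) + (diamNum n : ℝ)) = 1 := by
      rw [← abs_of_nonneg hdenpos.le, ← abs_mul, hprod n, abs_pow, abs_neg, abs_one, one_pow]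
    rw [Real.norm_eq_abs]
    calc |Real.sqrt 2 * (sideNum n : ℝ) - (diamNum n : ℝ)|
        = 1 / (Real.sqrt 2 * (sideNum n : ℝ) + (diamNum n : ℝ)) :=
          (eq_div_iff hdenpos.ne').mpr habs
      _ ≤ 1 / (n + 1 : ℝ) := one_div_le_one_div_of_le (by positivity) hden
  refine squeeze_zero_norm hbound tendsto_one_div_add_atTop_nhds_zero_nat
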